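/- Let C : D(C) ⊆ H → Y be closed and densely defined, and B : Y → X bounded with C*B* densely defined. Then the block operator matrix [[0, -C*B*],[closure(BC), 0]] on H ⊕ X is skew-selfadjoint (i.e. its adjoint equals its negative). -/

import Mathlib

/-!
Since `B` is bounded, `(BC)† = C†B†`. Hence `S = C†B†` and `T = closure (BC)` are mutually
adjoint: `T† = (BC)† = S`, and `S† = (BC)†† = T` by von Neumann's theorem, which applies because
`S` is densely defined (this also makes `BC` closable). For densely defined `S` and `T` the
adjoint of `[[0, -S], [T, 0]]` is `[[0, T†], [-S†, 0]]`, testing against `(x, 0)` and `(0, y)`;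
with `T† = S` and `S† = T` this is the negative of the original operator.
-/

open LinearPMap

variable {H Y X : Type*}
  [NormedAddCommGroup H] [InnerProductSpace ℝ H] [CompleteSpace H]
  [NormedAddCommGroup Y] [InnerProductSpace ℝ Y] [CompleteSpace Y]
  [NormedAddCommGroup X] [InnerProductSpace ℝ X] [CompleteSpace X]

/-- The composition `B ∘ C` of a bounded operator `B` with a partially defined operator `C`;
its domain is `D(C)`. -/
noncomputable def clmCompPMap (B : Y →L[ℝ] X) (C : H →ₗ.[ℝ] Y) : H →ₗ.[ℝ] X :=
  { domain := C.domain
    toFun := (B : Y →ₗ[ℝ] X).comp C.toFun }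

/-- The composition `T ∘ B` of a partially defined operator `T` with a bounded operator `B`;
its domain is `{x | B x ∈ D(T)}`. -/
noncomputable def pMapCompCLM (T : Y →ₗ.[ℝ] H) (B : X →L[ℝ] Y) : X →ₗ.[ℝ] H :=
  { domain := T.domain.comap (B : X →ₗ[ℝ] Y)
    toFun := T.toFun.comp ((B : X →ₗ[ℝ] Y).restrict fun _ hx => hx) }

/-- First projection from the product of two submodules. -/
def prodFst {p : Submodule ℝ H} {q : Submodule ℝ X} : ↥(p.prod q) →ₗ[ℝ] ↥p where
  toFun u := ⟨u.1.1, u.2.1⟩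
  map_add' _ _ := rfl
  map_smul' _ _ := rfl

/-- Second projection from the product of two submodules. -/
def prodSnd {p : Submodule ℝ H} {q : Submodule ℝ X} : ↥(p.prod q) →ₗ[ℝ] ↥q where
  toFun u := ⟨u.1.2, u.2.2⟩
  map_add' _ _ := rfl
  map_smul' _ _ := rfl

/-- The block operator matrix `[[0, -S],[T, 0]]` on the Hilbert space direct sum `H ⊕ X`,
with domain `D(T) ⊕ D(S)`, where `S : D(S) ⊆ X → H` and `T : D(T) ⊆ H → X`. -/
noncomputable def blockOff (S : X →ₗ.[ℝ] H) (T : H →ₗ.[ℝ] X) :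
    (WithLp 2 (H × X)) →ₗ.[ℝ] (WithLp 2 (H × X)) :=
  { domain := (T.domain.prod S.domain).comap
      ((WithLp.linearEquiv 2 ℝ (H × X)) : WithLp 2 (H × X) →ₗ[ℝ] H × X)
    toFun := ((WithLp.linearEquiv 2 ℝ (H × X)).symm : H × X →ₗ[ℝ] WithLp 2 (H × X)).comp
      ((LinearMap.prod ((-S.toFun).comp prodSnd) (T.toFun.comp prodFst)).comp
        (((WithLp.linearEquiv 2 ℝ (H × X)) : WithLp 2 (H × X) →ₗ[ℝ] H × X).restrict
          fun _ hx => hx)) }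

open scoped InnerProductSpace

namespace LinearPMap

variable {𝕜 E F : Type*} [RCLike 𝕜]
  [NormedAddCommGroup E] [InnerProductSpace 𝕜 E] [NormedAddCommGroup F] [InnerProductSpace 𝕜 F]
  {T : E →ₗ.[𝕜] F} {S : F →ₗ.[𝕜] E}

theorem IsFormalAdjoint.inner_eq_of_mem_closure_graph (h : S.IsFormalAdjoint T) (y : S.domain)
    {p : E × F} (hp : p ∈ T.graph.topologicalClosure) : ⟪S y, p.1⟫_𝕜 = ⟪(y : F), p.2⟫_𝕜 := by
  have hclosed : _root_.IsClosed {q : E × F | ⟪S y, q.1⟫_𝕜 = ⟪(y : F), q.2⟫_𝕜} :=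
    isClosed_eq (continuous_const.inner continuous_fst) (continuous_const.inner continuous_snd)
  rw [← SetLike.mem_coe, Submodule.topologicalClosure_coe] at hp
  refine closure_minimal (fun q hq => ?_) hclosed hp
  obtain ⟨x, rfl⟩ := T.mem_graph_iff'.mp hq
  exact h y x

theorem IsFormalAdjoint.isClosable (h : S.IsFormalAdjoint T) (hS : Dense (S.domain : Set F)) :
    T.IsClosable := by
  refine ⟨T.graph.topologicalClosure.toLinearPMap, (Submodule.toLinearPMap_graph_eq _ ?_).symm⟩
  intro p hp hp0
  refine hS.eq_zero_of_inner_right 𝕜 fun y hy => ?_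
  simpa [hp0] using (h.inner_eq_of_mem_closure_graph ⟨y, hy⟩ hp).symm

theorem IsFormalAdjoint.closure (h : S.IsFormalAdjoint T) (hT : T.IsClosable) :
    S.IsFormalAdjoint T.closure := fun y x => by
  have hx : ((x : E), T.closure x) ∈ T.graph.topologicalClosure :=
    hT.graph_closure_eq_closure_graph ▸ T.closure.mem_graph x
  exact h.inner_eq_of_mem_closure_graph y hx

theorem IsFormalAdjoint.of_le {T' : E →ₗ.[𝕜] F} (h : T'.IsFormalAdjoint S) (hle : T ≤ T') :
    T.IsFormalAdjoint S := fun x y => by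
  rw [hle.2 (y := ⟨x, hle.1 x.2⟩) rfl]
  exact h _ y

variable [CompleteSpace E]

theorem exists_adjoint_apply_eq (hT : Dense (T.domain : Set E)) {y : F} {w : E}
    (h : ∀ x : T.domain, ⟪w, x⟫_𝕜 = ⟪y, T x⟫_𝕜) : ∃ hy : y ∈ T†.domain, T† ⟨y, hy⟩ = w :=
  ⟨mem_adjoint_domain_of_exists y ⟨w, h⟩, adjoint_apply_eq hT _ h⟩

theorem adjoint_closure (hT : Dense (T.domain : Set E)) (hT' : T.IsClosable) :
    T.closure† = T† := by
  have hTc : Dense (T.closure.domain : Set E) := hT.mono T.le_closure.1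
  refine le_antisymm ?_ ?_
  · exact ((adjoint_isFormalAdjoint hTc).symm.of_le T.le_closure).le_adjoint hT
  · exact ((adjoint_isFormalAdjoint hT).closure hT').symm.le_adjoint hTc

variable [CompleteSpace F]

theorem mem_closure_graph_of_forall_inner_adjoint (hT : Dense (T.domain : Set E)) {p : E × F}
    (hp : ∀ y : T†.domain, ⟪T† y, p.1⟫_𝕜 = ⟪(y : F), p.2⟫_𝕜) :
    p ∈ T.graph.topologicalClosure := by
  -- The closure of the graph is its double orthogonal complement in the L² product, and the
  -- orthogonal complement of the graph consists of the pairs `(-T† y, y)`.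
  set e := WithLp.prodContinuousLinearEquiv 2 𝕜 E F
  set K : Submodule 𝕜 (WithLp 2 (E × F)) := T.graph.comap (e.toLinearEquiv : _ →ₗ[𝕜] E × F)
  suffices e.symm p ∈ Kᗮᗮ by
    rw [Submodule.orthogonal_orthogonal_eq_closure, ← SetLike.mem_coe,
      Submodule.topologicalClosure_coe] at this
    have hK : (K : Set _) = e.toHomeomorph ⁻¹' T.graph := rfl
    rw [hK, ← e.toHomeomorph.preimage_closure] at this
    rw [← SetLike.mem_coe, Submodule.topologicalClosure_coe]
    simpa using this
  intro w hw
  have hgraph : ∀ x : T.domain, ⟪-w.fst, x⟫_𝕜 = ⟪w.snd, T x⟫_𝕜 := fun x => by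
    have h0 : ⟪e.symm (x, T x), w⟫_𝕜 = 0 := hw _ (by simp [K, e])
    simp only [e, WithLp.prodContinuousLinearEquiv_symm_apply, WithLp.prod_inner_apply,
      WithLp.ofLp_fst, WithLp.ofLp_snd] at h0
    rw [inner_neg_left, ← inner_conj_symm w.fst, ← inner_conj_symm w.snd, neg_eq_iff_add_eq_zero]
    simpa using congrArg (starRingEnd 𝕜) h0
  obtain ⟨hw2, hTw⟩ := exists_adjoint_apply_eq hT hgraph
  have := hp ⟨_, hw2⟩
  rw [hTw, inner_neg_left] at this
  simp only [e, WithLp.prodContinuousLinearEquiv_symm_apply, WithLp.prod_inner_apply,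
    WithLp.ofLp_fst, WithLp.ofLp_snd]
  linear_combination -this

theorem adjoint_adjoint_eq_closure (hT : Dense (T.domain : Set E)) (hT' : Dense (T†.domain : Set F)) :
    T†† = T.closure := by
  have hcl : T.IsClosable := (adjoint_isFormalAdjoint hT).isClosable hT'
  refine le_antisymm (le_of_le_graph fun p hp => ?_) ?_
  · rw [← hcl.graph_closure_eq_closure_graph]
    obtain ⟨x, rfl⟩ := T††.mem_graph_iff'.mp hp
    exact mem_closure_graph_of_forall_inner_adjoint hT fun y =>
      (adjoint_isFormalAdjoint hT').symm y x
  · exact ((adjoint_isFormalAdjoint hT).closure hcl).le_adjoint hT'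

end LinearPMap

open RealInnerProductSpace

theorem clmCompPMap_adjoint {C : H →ₗ.[ℝ] Y} (hC : Dense (C.domain : Set H)) (B : Y →L[ℝ] X) :
    (clmCompPMap B C)† = pMapCompCLM C† (ContinuousLinearMap.adjoint B) := by
  have hBC : Dense ((clmCompPMap B C).domain : Set H) := hC
  refine le_antisymm (le_of_eqLocus_ge fun x hx => ?_) (IsFormalAdjoint.le_adjoint hBC ?_)
  · have hpair : ∀ u : C.domain,
        ⟪(clmCompPMap B C)† ⟨x, hx⟩, (u : H)⟫ = ⟪ContinuousLinearMap.adjoint B x, C u⟫ :=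
      fun u => by
        rw [ContinuousLinearMap.adjoint_inner_left]
        exact adjoint_isFormalAdjoint hBC ⟨x, hx⟩ u
    obtain ⟨hmem, happly⟩ := exists_adjoint_apply_eq hC hpair
    exact ⟨hx, hmem, happly.symm⟩
  · intro u x
    change ⟪B (C ⟨u, u.2⟩), (x : X)⟫ = ⟪(u : H), C† ⟨ContinuousLinearMap.adjoint B x, x.2⟩⟫
    rw [← ContinuousLinearMap.adjoint_inner_right]
    exact (adjoint_isFormalAdjoint hC).symm ⟨u, u.2⟩ ⟨_, x.2⟩

section blockOff

variable {E F : Type*} [NormedAddCommGroup E] [InnerProductSpace ℝ E]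
  [NormedAddCommGroup F] [InnerProductSpace ℝ F] {S : F →ₗ.[ℝ] E} {T : E →ₗ.[ℝ] F}

theorem blockOff_apply_fst (p : (blockOff S T).domain) :
    (blockOff S T p).fst = -S ⟨(p : WithLp 2 (E × F)).snd, p.2.2⟩ :=
  rfl

theorem blockOff_apply_snd (p : (blockOff S T).domain) :
    (blockOff S T p).snd = T ⟨(p : WithLp 2 (E × F)).fst, p.2.1⟩ :=
  rfl

theorem blockOff_neg_neg : blockOff (-S) (-T) = -blockOff S T :=
  LinearPMap.ext rfl fun _ _ _ => WithLp.ofLp_injective 2 (Prod.ext rfl rfl)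

theorem dense_blockOff_domain (hS : Dense (S.domain : Set F)) (hT : Dense (T.domain : Set E)) :
    Dense ((blockOff S T).domain : Set (WithLp 2 (E × F))) :=
  (hT.prod hS).preimage (WithLp.prodContinuousLinearEquiv 2 ℝ E F).toHomeomorph.isOpenMap

theorem blockOff_isFormalAdjoint {S' : E →ₗ.[ℝ] F} {T' : F →ₗ.[ℝ] E}
    (hS : S.IsFormalAdjoint S') (hT : T.IsFormalAdjoint T') :
    (blockOff S T).IsFormalAdjoint (blockOff (-T') (-S')) := by
  intro x y
  have hx₁ := hT ⟨(x : WithLp 2 (E × F)).fst, x.2.1⟩ ⟨(y : WithLp 2 (E × F)).snd, y.2.2⟩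
  have hx₂ := hS ⟨(x : WithLp 2 (E × F)).snd, x.2.2⟩ ⟨(y : WithLp 2 (E × F)).fst, y.2.1⟩
  simp only [WithLp.prod_inner_apply, WithLp.ofLp_fst, WithLp.ofLp_snd, blockOff_apply_fst,
    blockOff_apply_snd, LinearPMap.neg_apply, inner_neg_left, inner_neg_right]
  linarith

theorem blockOff_adjoint [CompleteSpace E] [CompleteSpace F] (hS : Dense (S.domain : Set F))
    (hT : Dense (T.domain : Set E)) : (blockOff S T)† = blockOff (-T†) (-S†) := by
  have hA := dense_blockOff_domain hS hT
  refine le_antisymm (le_of_eqLocus_ge fun p hp => ?_)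
    (blockOff_isFormalAdjoint (adjoint_isFormalAdjoint hS).symm
      (adjoint_isFormalAdjoint hT).symm |>.le_adjoint hA)
  set z := (blockOff S T)† ⟨p, hp⟩
  have hz : ∀ u : (blockOff S T).domain, ⟪z, (u : WithLp 2 (E × F))⟫ = ⟪p, blockOff S T u⟫ :=
    adjoint_isFormalAdjoint hA ⟨p, hp⟩
  have hTp : ∀ x : T.domain, ⟪z.fst, (x : E)⟫ = ⟪p.snd, T x⟫ := fun x => by
    have := hz ⟨WithLp.toLp 2 ((x : E), 0), x.2, S.domain.zero_mem⟩
    simpa [blockOff_apply_fst, blockOff_apply_snd, ← ZeroMemClass.zero_def] using this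
  have hSp : ∀ y : S.domain, ⟪-z.snd, (y : F)⟫ = ⟪p.fst, S y⟫ := fun y => by
    have := hz ⟨WithLp.toLp 2 (0, (y : F)), T.domain.zero_mem, y.2⟩
    rw [inner_neg_left, neg_eq_iff_eq_neg]
    simpa [blockOff_apply_fst, blockOff_apply_snd, ← ZeroMemClass.zero_def] using this
  obtain ⟨hp₂, hTz⟩ := exists_adjoint_apply_eq hT hTp
  obtain ⟨hp₁, hSz⟩ := exists_adjoint_apply_eq hS hSp
  refine ⟨hp, ⟨hp₁, hp₂⟩, WithLp.ofLp_injective 2 (Prod.ext ?_ ?_)⟩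
  · exact hTz.symm.trans (neg_neg _).symm
  · exact (neg_eq_iff_eq_neg.mpr hSz).symm

end blockOff

theorem blockOff_skewAdjoint_general (C : H →ₗ.[ℝ] Y)
    (hCdense : Dense (C.domain : Set H)) (B : Y →L[ℝ] X)
    (hdense : Dense ((pMapCompCLM C.adjoint (ContinuousLinearMap.adjoint B)).domain : Set X)) :
    (blockOff (pMapCompCLM C.adjoint (ContinuousLinearMap.adjoint B))
        ((clmCompPMap B C).closure)).adjoint =
      -(blockOff (pMapCompCLM C.adjoint (ContinuousLinearMap.adjoint B))
        ((clmCompPMap B C).closure)) := by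
  have hBC : Dense ((clmCompPMap B C).domain : Set H) := hCdense
  have hadj := clmCompPMap_adjoint hCdense B
  have hadj_dense : Dense ((clmCompPMap B C)†.domain : Set X) := hadj ▸ hdense
  have hclosable := (adjoint_isFormalAdjoint hBC).isClosable hadj_dense
  rw [blockOff_adjoint hdense (hBC.mono (clmCompPMap B C).le_closure.1), ← hadj,
    adjoint_closure hBC hclosable, adjoint_adjoint_eq_closure hBC hadj_dense, blockOff_neg_neg]

/-- Let `C` be closed and densely defined from `H` to `Y`, `B : Y → X` bounded with `C* B*`
densely defined.  Then the block operator matrix `[[0, -C* B*],[closure(BC), 0]]` on `H ⊕ X`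
is skew-selfadjoint, i.e. its adjoint equals its negative. -/
theorem blockOff_skewAdjoint (C : H →ₗ.[ℝ] Y) (hC : C.IsClosed)
    (hCdense : Dense (C.domain : Set H)) (B : Y →L[ℝ] X)
    (hdense : Dense ((pMapCompCLM C.adjoint (ContinuousLinearMap.adjoint B)).domain : Set X)) :
    (blockOff (pMapCompCLM C.adjoint (ContinuousLinearMap.adjoint B))
        ((clmCompPMap B C).closure)).adjoint =
      -(blockOff (pMapCompCLM C.adjoint (ContinuousLinearMap.adjoint B))
        ((clmCompPMap B C).closure)) :=
  blockOff_skewAdjoint_general C hCdense B hdense
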